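/- Let n ≥ 3 and for x ∈ F2^n (indices mod n), let c(x) = Σ_{j=0}^{n-1} x_j (x_{j-1} XOR x_{j+1}) computed as an integer (each term x_j(x_{j-1} XOR x_{j+1}) ∈ {0,1}). Then c(x) is always even, and c(x)/2 mod 2 equals Σ_{j=0}^{n-1} x_{j-1} x_j x_{j+1} + Σ_{j=0}^{n-1} x_j x_{j+1} mod 2. -/
import Mathlib


/-- For `x ∈ F₂ⁿ` (cyclic indices), the integer
`c(x) = Σ_j (x_j · (x_{j-1} XOR x_{j+1}))` is even, and
`c(x)/2 ≡ Σ_j x_{j-1} x_j x_{j+1} + Σ_j x_j x_{j+1} (mod 2)`. -/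
theorem phase_count_even_and_sign (n : ℕ) [NeZero n] (hn : 3 ≤ n)
    (x : ZMod n → ZMod 2) (c : ℕ)
    (hc : c = ∑ j : ZMod n, (x j * (x (j - 1) + x (j + 1))).val) :
    Even c ∧
      ((c / 2 : ℕ) : ZMod 2) =
        (∑ j : ZMod n, x (j - 1) * x j * x (j + 1)) +
          ∑ j : ZMod n, x j * x (j + 1) := by
  set T : ℕ := ∑ j : ZMod n, (x (j-1)).val * (x j).val * (x (j+1)).val with hT
  set S : ℕ := ∑ j : ZMod n, (x j).val * (x (j+1)).val with hS
  have key : ∀ a b d : ZMod 2,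
      (a * (b + d)).val + 2 * (b.val * a.val * d.val) = b.val * a.val + a.val * d.val := by
    decide
  have hS1 : ∑ j : ZMod n, (x (j-1)).val * (x j).val = S := by
    rw [hS]
    exact (Fintype.sum_equiv (Equiv.addRight (1 : ZMod n))
      (fun j => (x j).val * (x (j+1)).val)
      (fun j => (x (j-1)).val * (x j).val) (fun j => by simp)).symm
  have hmain : c + 2 * T = 2 * S := by
    rw [hc, hT, Finset.mul_sum, ← Finset.sum_add_distrib]
    have : ∀ j : ZMod n,
        (x j * (x (j-1) + x (j+1))).val + 2 * ((x (j-1)).val * (x j).val * (x (j+1)).val)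
          = (x (j-1)).val * (x j).val + (x j).val * (x (j+1)).val := fun j =>
      key (x j) (x (j-1)) (x (j+1))
    rw [Finset.sum_congr rfl (fun j _ => this j), Finset.sum_add_distrib, hS1, ← hS,
      two_mul]
  have hTS : T ≤ S := by omega
  have heven : Even c := ⟨S - T, by omega⟩
  refine ⟨heven, ?_⟩
  have hdiv : c / 2 = S - T := by omega
  have h2 : c / 2 + T = S := by omega
  have hcast : ((c / 2 : ℕ) : ZMod 2) + (T : ZMod 2) = (S : ZMod 2) := by
    exact_mod_cast congrArg (fun m : ℕ => (m : ZMod 2)) h2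
  have hfin : ((c / 2 : ℕ) : ZMod 2) = (S : ZMod 2) + (T : ZMod 2) := by
    have := eq_sub_of_add_eq hcast
    rwa [sub_eq_add_neg, CharTwo.neg_eq] at this
  rw [hfin, hT, hS]
  push_cast
  simp only [ZMod.natCast_val, ZMod.cast_id]
  ring
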